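/- The second nilpotent product Z *₂ Z is isomorphic to the integral Heisenberg group Heis(Z). -/

import Mathlib

open Monoid
open scoped commutatorElement

/-- The normal subgroup of the free product `A ∗ B` generated by commutators
`⁅x, ⁅a, b⁆⁆` with `x ∈ A ∗ B`, `a ∈ A`, `b ∈ B`. -/
def nil2Rel (A B : Type*) [Group A] [Group B] : Subgroup (Coprod A B) :=
  Subgroup.normalClosure
    {z | ∃ (x : Coprod A B) (a : A) (b : B), z = ⁅x, ⁅(Coprod.inl a : Coprod A B), Coprod.inr b⁆⁆}

instance (A B : Type*) [Group A] [Group B] : (nil2Rel A B).Normal :=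
  Subgroup.normalClosure_normal

/-- The second nilpotent product `A *₂ B = (A ∗ B)/[A ∗ B, [A,B]]`. -/
def Nil2 (A B : Type*) [Group A] [Group B] : Type _ :=
  Coprod A B ⧸ nil2Rel A B

instance (A B : Type*) [Group A] [Group B] : Group (Nil2 A B) :=
  QuotientGroup.Quotient.group _

/-- Canonical map `A → A *₂ B`. -/
def Nil2.inl {A B : Type*} [Group A] [Group B] : A →* Nil2 A B :=
  (QuotientGroup.mk' (nil2Rel A B)).comp Coprod.inl

/-- Canonical map `B → A *₂ B`. -/
def Nil2.inr {A B : Type*} [Group A] [Group B] : B →* Nil2 A B :=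
  (QuotientGroup.mk' (nil2Rel A B)).comp Coprod.inr

/-- The subgroup `[A,B]⁽²⁾` of `A *₂ B` generated by the commutators `⁅a, b⁆`. -/
def commSubgroup (A B : Type*) [Group A] [Group B] : Subgroup (Nil2 A B) :=
  Subgroup.closure {z | ∃ (a : A) (b : B), z = ⁅(Nil2.inl a : Nil2 A B), Nil2.inr b⁆}

/-- The Heisenberg group of upper unitriangular `3 × 3` matrices over `R`, as a subgroup
of the units of the matrix ring. -/
def Heis (R : Type*) [CommRing R] : Subgroup (Matrix (Fin 3) (Fin 3) R)ˣ where
  carrier := {M | ∃ a b c : R, (M : Matrix (Fin 3) (Fin 3) R) = !![1, a, c; 0, 1, b; 0, 0, 1]}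
  one_mem' := ⟨0, 0, 0, by simp [Matrix.one_fin_three]⟩
  mul_mem' := by
    rintro M N ⟨a, b, c, hM⟩ ⟨a', b', c', hN⟩
    refine ⟨a + a', b + b', c + c' + a * b', ?_⟩
    rw [Units.val_mul, hM, hN, Matrix.mul_fin_three]
    congr 1 <;> ring
  inv_mem' := by
    rintro M ⟨a, b, c, hM⟩
    refine ⟨-a, -b, -c + a * b, ?_⟩
    have h : (M : Matrix (Fin 3) (Fin 3) R) *
        !![1, -a, -c + a * b; 0, 1, -b; 0, 0, 1] = 1 := by
      rw [hM, Matrix.mul_fin_three, Matrix.one_fin_three]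
      congr 1 <;> ring
    calc (↑M⁻¹ : Matrix (Fin 3) (Fin 3) R)
        = ↑M⁻¹ * ((M : Matrix (Fin 3) (Fin 3) R) *
            !![1, -a, -c + a * b; 0, 1, -b; 0, 0, 1]) := by rw [h, mul_one]
      _ = !![1, -a, -c + a * b; 0, 1, -b; 0, 0, 1] := by
            rw [← mul_assoc, Units.inv_mul, one_mul]


/-! The commutator `z = ⁅x, y⁆` of the generators `x`, `y` of `ℤ *₂ ℤ` is central, so the words
`x ^ a * y ^ b * z ^ c` multiply like unitriangular matrices:
`(a, b, c) · (a', b', c') = (a + a', b + b', c + c' - a' * b)`. Hence the matrix with entries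
`a, b, c` (in positions `(0,1), (1,2), (0,2)`) can be sent to `x ^ a * y ^ b * z ^ (c - a * b)`,
and this homomorphism is inverse to the map `ℤ *₂ ℤ → Heis ℤ` sending `x`, `y` to the two
elementary matrices, which exists because their commutator is central in `Heis ℤ`. -/

section ClassTwo

variable {G : Type*} [Group G]

theorem commutatorElement_zpow_left {g h : G} (hc : Commute g ⁅g, h⁆) (m : ℤ) :
    ⁅g ^ m, h⁆ = ⁅g, h⁆ ^ m := by
  have hconj : h * g * h⁻¹ = ⁅g, h⁆⁻¹ * g := by
    rw [commutatorElement_def]; group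
  calc ⁅g ^ m, h⁆ = g ^ m * (h * g * h⁻¹) ^ (-m) := by
        rw [commutatorElement_def, conj_zpow, zpow_neg]; group
    _ = g ^ m * ⁅g, h⁆ ^ m * g ^ (-m) := by
        rw [hconj, hc.inv_right.symm.mul_zpow, inv_zpow', neg_neg, ← mul_assoc]
    _ = ⁅g, h⁆ ^ m := by
        rw [(hc.zpow_zpow m m).eq]; group

theorem commutatorElement_zpow_right {g h : G} (hc : Commute h ⁅g, h⁆) (n : ℤ) :
    ⁅g, h ^ n⁆ = ⁅g, h⁆ ^ n := by
  have hc' : Commute h ⁅h, g⁆ := by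
    rw [← commutatorElement_inv]; exact hc.inv_right
  rw [← commutatorElement_inv, commutatorElement_zpow_left hc', ← inv_zpow, commutatorElement_inv]

theorem commutatorElement_zpow_zpow {g h : G} (hg : Commute g ⁅g, h⁆) (hh : Commute h ⁅g, h⁆)
    (m n : ℤ) : ⁅g ^ m, h ^ n⁆ = ⁅g, h⁆ ^ (m * n) := by
  have hgn : Commute g ⁅g, h ^ n⁆ := by
    rw [commutatorElement_zpow_right hh]; exact hg.zpow_right n
  rw [commutatorElement_zpow_left hgn, commutatorElement_zpow_right hh, ← zpow_mul, mul_comm]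

def heisWord (g h : G) (a b c : ℤ) : G :=
  g ^ a * h ^ b * ⁅g, h⁆ ^ c

theorem heisWord_mul {g h : G} (hg : Commute g ⁅g, h⁆) (hh : Commute h ⁅g, h⁆)
    (a b c a' b' c' : ℤ) :
    heisWord g h a b c * heisWord g h a' b' c' =
      heisWord g h (a + a') (b + b') (c + c' - a' * b) := by
  unfold heisWord
  have hgh := commutatorElement_zpow_zpow hg hh a' b
  generalize ⁅g, h⁆ = z at hg hh hgh ⊢
  have hswap : h ^ b * g ^ a' = g ^ a' * h ^ b * z ^ (-(a' * b)) :=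
    calc h ^ b * g ^ a' = z ^ (-(a' * b)) * (g ^ a' * h ^ b) := by
          rw [zpow_neg, ← hgh, commutatorElement_def]; group
      _ = g ^ a' * h ^ b * z ^ (-(a' * b)) :=
          ((hg.zpow_zpow a' _).mul_left (hh.zpow_zpow b _)).eq.symm
  calc g ^ a * h ^ b * z ^ c * (g ^ a' * h ^ b' * z ^ c')
      = g ^ a * h ^ b * (z ^ c * g ^ a') * h ^ b' * z ^ c' := by group
    _ = g ^ a * (h ^ b * g ^ a') * (z ^ c * h ^ b') * z ^ c' := by
        rw [← (hg.zpow_zpow a' c).eq]; group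
    _ = g ^ a * (g ^ a' * h ^ b * z ^ (-(a' * b))) * (h ^ b' * z ^ c) * z ^ c' := by
        rw [hswap, (hh.zpow_zpow b' c).eq]
    _ = g ^ a * g ^ a' * h ^ b * (z ^ (-(a' * b)) * h ^ b') * z ^ c * z ^ c' := by group
    _ = g ^ a * g ^ a' * h ^ b * (h ^ b' * z ^ (-(a' * b))) * z ^ c * z ^ c' := by
        rw [(hh.zpow_zpow b' _).eq]
    _ = g ^ (a + a') * h ^ (b + b') * z ^ (c + c' - a' * b) := by group

end ClassTwo

namespace Nil2

variable {A B G : Type*} [Group A] [Group B] [Group G]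

theorem commute_commutatorElement_inl_inr (x : Nil2 A B) (a : A) (b : B) :
    Commute x ⁅(inl a : Nil2 A B), inr b⁆ := by
  obtain ⟨x, rfl⟩ := QuotientGroup.mk'_surjective (nil2Rel A B) x
  refine commutatorElement_eq_one_iff_commute.mp ?_
  exact (QuotientGroup.eq_one_iff _).mpr (Subgroup.subset_normalClosure ⟨x, a, b, rfl⟩)

def lift (f : A →* G) (g : B →* G) (hfg : ∀ x a b, Commute x ⁅f a, g b⁆) : Nil2 A B →* G :=
  QuotientGroup.lift _ (Coprod.lift f g) <| Subgroup.normalClosure_le_normal <| by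
    rintro _ ⟨x, a, b, rfl⟩
    simp [map_commutatorElement, commutatorElement_eq_one_iff_commute, hfg]

@[simp]
theorem lift_inl (f : A →* G) (g : B →* G) (hfg : ∀ x a b, Commute x ⁅f a, g b⁆) (a : A) :
    lift f g hfg (inl a) = f a :=
  rfl

@[simp]
theorem lift_inr (f : A →* G) (g : B →* G) (hfg : ∀ x a b, Commute x ⁅f a, g b⁆) (b : B) :
    lift f g hfg (inr b) = g b :=
  rfl

@[ext]
theorem hom_ext {φ ψ : Nil2 A B →* G} (hl : φ.comp inl = ψ.comp inl)
    (hr : φ.comp inr = ψ.comp inr) : φ = ψ :=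
  QuotientGroup.monoidHom_ext _ (Coprod.hom_ext hl hr)

end Nil2

namespace Heis

variable {R : Type*} [CommRing R]

def mk (a b c : R) : Heis R :=
  ⟨⟨!![1, a, c; 0, 1, b; 0, 0, 1], !![1, -a, a * b - c; 0, 1, -b; 0, 0, 1],
    by simp [Matrix.one_fin_three], by simp [Matrix.one_fin_three]; ring⟩, a, b, c, rfl⟩

def entry (g : Heis R) (i j : Fin 3) : R :=
  ((g : (Matrix (Fin 3) (Fin 3) R)ˣ) : Matrix (Fin 3) (Fin 3) R) i j

@[simp]
theorem entry_mk_zero_one (a b c : R) : entry (mk a b c) 0 1 = a :=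
  rfl

@[simp]
theorem entry_mk_one_two (a b c : R) : entry (mk a b c) 1 2 = b :=
  rfl

@[simp]
theorem entry_mk_zero_two (a b c : R) : entry (mk a b c) 0 2 = c :=
  rfl

theorem exists_eq_mk (g : Heis R) : ∃ a b c, g = mk a b c := by
  obtain ⟨g, a, b, c, hg⟩ := g
  exact ⟨a, b, c, Subtype.ext (Units.ext hg)⟩

theorem mk_zero : mk (0 : R) 0 0 = 1 :=
  Subtype.ext (Units.ext (Matrix.one_fin_three).symm)

theorem mk_mul (a b c a' b' c' : R) :
    mk a b c * mk a' b' c' = mk (a + a') (b + b') (c + c' + a * b') :=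
  Subtype.ext <| Units.ext <| by
    simp only [mk, Subgroup.coe_mul, Units.val_mul, Matrix.mul_fin_three]
    congr 1
    ring_nf

theorem mk_inv (a b c : R) : (mk a b c)⁻¹ = mk (-a) (-b) (a * b - c) :=
  Subtype.ext (Units.ext rfl)

theorem commutatorElement_mk (a b c a' b' c' : R) :
    ⁅mk a b c, mk a' b' c'⁆ = mk 0 0 (a * b' - a' * b) := by
  simp only [commutatorElement_def, mk_inv, mk_mul]
  congr 1 <;> ring

theorem commute_mk_zero_zero (g : Heis R) (c : R) : Commute g (mk 0 0 c) := by
  obtain ⟨a, b, c', rfl⟩ := exists_eq_mk g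
  simp only [Commute, SemiconjBy, mk_mul]
  congr 1 <;> ring

@[simps]
def ofEntry01 : Multiplicative R →* Heis R where
  toFun a := mk a.toAdd 0 0
  map_one' := mk_zero
  map_mul' a a' := by rw [mk_mul]; simp

@[simps]
def ofEntry12 : Multiplicative R →* Heis R where
  toFun b := mk 0 b.toAdd 0
  map_one' := mk_zero
  map_mul' b b' := by rw [mk_mul]; simp

variable {G : Type*} [Group G]

def intLift (g h : G) (hg : Commute g ⁅g, h⁆) (hh : Commute h ⁅g, h⁆) : Heis ℤ →* G where
  toFun x := heisWord g h (entry x 0 1) (entry x 1 2) (entry x 0 2 - entry x 0 1 * entry x 1 2)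
  map_one' := by simp [← mk_zero, heisWord]
  map_mul' x y := by
    obtain ⟨a, b, c, rfl⟩ := exists_eq_mk x
    obtain ⟨a', b', c', rfl⟩ := exists_eq_mk y
    simp only [mk_mul, entry_mk_zero_one, entry_mk_one_two, entry_mk_zero_two, heisWord_mul hg hh]
    congr 1
    ring

@[simp]
theorem intLift_mk (g h : G) (hg : Commute g ⁅g, h⁆) (hh : Commute h ⁅g, h⁆) (a b c : ℤ) :
    intLift g h hg hh (mk a b c) = heisWord g h a b (c - a * b) := by
  simp [intLift]

end Heis

open Multiplicative

local notation "ℤ*₂ℤ" => Nil2 (Multiplicative ℤ) (Multiplicative ℤ)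

def Nil2.toHeis : ℤ*₂ℤ →* Heis ℤ :=
  Nil2.lift Heis.ofEntry01 Heis.ofEntry12 fun x a b => by
    simp only [Heis.ofEntry01_apply, Heis.ofEntry12_apply, Heis.commutatorElement_mk]
    exact Heis.commute_mk_zero_zero x _

def Heis.toNil2 : Heis ℤ →* ℤ*₂ℤ :=
  Heis.intLift (Nil2.inl (ofAdd 1)) (Nil2.inr (ofAdd 1))
    (Nil2.commute_commutatorElement_inl_inr _ _ _) (Nil2.commute_commutatorElement_inl_inr _ _ _)

theorem Heis.toNil2_comp_toHeis : Heis.toNil2.comp Nil2.toHeis = MonoidHom.id ℤ*₂ℤ := by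
  ext : 1 <;> apply MonoidHom.ext_mint <;> simp [Heis.toNil2, Nil2.toHeis, heisWord]

theorem Nil2.toHeis_heisWord (a b c : ℤ) :
    Nil2.toHeis (heisWord (Nil2.inl (ofAdd 1)) (Nil2.inr (ofAdd 1)) a b c) =
      Heis.mk a b (a * b + c) := by
  rw [heisWord, ← commutatorElement_zpow_left (Nil2.commute_commutatorElement_inl_inr _ _ _)]
  simp only [← map_zpow, ← Int.ofAdd_mul, one_mul]
  simp [Nil2.toHeis, map_commutatorElement, Heis.mk_mul, Heis.commutatorElement_mk]

theorem Nil2.toHeis_toNil2 (g : Heis ℤ) : Nil2.toHeis (Heis.toNil2 g) = g := by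
  obtain ⟨a, b, c, rfl⟩ := Heis.exists_eq_mk g
  rw [Heis.toNil2, Heis.intLift_mk, Nil2.toHeis_heisWord, add_sub_cancel]

/-- `ℤ *₂ ℤ` is isomorphic to the integral Heisenberg group. -/
theorem stmt15 :
    Nonempty (Nil2 (Multiplicative ℤ) (Multiplicative ℤ) ≃* Heis ℤ) :=
  ⟨MonoidHom.toMulEquiv Nil2.toHeis Heis.toNil2 Heis.toNil2_comp_toHeis
    (MonoidHom.ext Nil2.toHeis_toNil2)⟩
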